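/- arXiv:2207.10778 — 3 statements merged into one kernel-verified Lean document; each statement's English description precedes it below -/
import Mathlib

section
/- If 𝒮 is a laminar collection of many-sided separations of a graph G (pairwise non-crossing), then its separation projection ρ(𝒮) = ∪_{S ∈ 𝒮} ρ(S) is a laminar collection of standard separations of G. -/
open Set

variable {V : Type*}

/-- `X` is anticomplete to `Y` in `G`: no edge of `G` has one end in `X` and one in `Y`. -/
def Anticomplete (G : SimpleGraph V) (X Y : Set V) : Prop :=
  ∀ x ∈ X, ∀ y ∈ Y, ¬ G.Adj x y

/-- A many-sided separation `(A 0, …, A (n+1), C)` of `G`: a partition of `V(G)` into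
`k = n + 2 ≥ 2` sides and a center `C`, with the sides pairwise anticomplete. -/
structure MSep {V : Type*} (G : SimpleGraph V) where
  n : ℕ
  A : Fin (n + 2) → Set V
  C : Set V
  disj : ∀ i j, i ≠ j → Disjoint (A i) (A j)
  disjC : ∀ i, Disjoint (A i) C
  cover : (⋃ i, A i) ∪ C = Set.univ
  anti : ∀ i j, i ≠ j → Anticomplete G (A i) (A j)

/-- Two many-sided separations are non-crossing: there are sides `i`, `j` such that
`((⋃_p B_p) \ B_j) ∪ D ⊆ A_i ∪ C` and `((⋃_p A_p) \ A_i) ∪ C ⊆ B_j ∪ D`. -/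
def MSep.NonCrossing {G : SimpleGraph V} (S S' : MSep G) : Prop :=
  ∃ (i : Fin (S.n + 2)) (j : Fin (S'.n + 2)),
    ((⋃ p, S'.A p) \ S'.A j) ∪ S'.C ⊆ S.A i ∪ S.C ∧
    ((⋃ p, S.A p) \ S.A i) ∪ S.C ⊆ S'.A j ∪ S'.C

/-- A standard separation `(A 0, A 1, C)` of `G`. -/
structure GSep {V : Type*} (G : SimpleGraph V) where
  A : Fin 2 → Set V
  C : Set V
  disj : ∀ i j, i ≠ j → Disjoint (A i) (A j)
  disjC : ∀ i, Disjoint (A i) C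
  cover : (⋃ i, A i) ∪ C = Set.univ
  anti : Anticomplete G (A 0) (A 1)

/-- Two standard separations are non-crossing. -/
def GSep.NonCrossing {G : SimpleGraph V} (P Q : GSep G) : Prop :=
  ∃ i j : Fin 2, P.A (1 - i) ∪ P.C ⊆ Q.A j ∪ Q.C ∧ Q.A (1 - j) ∪ Q.C ⊆ P.A i ∪ P.C

/-- The separation projection `ρ(S)` of a many-sided separation. -/
def MSep.proj {G : SimpleGraph V} (S : MSep G) : Set (GSep G) :=
  { P | ∃ i, P.A 0 = S.A i ∧ P.A 1 = (⋃ j, S.A j) \ S.A i ∧ P.C = S.C }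

lemma GSep.ext' {G : SimpleGraph V} {P Q : GSep G}
    (h0 : P.A 0 = Q.A 0) (h1 : P.A 1 = Q.A 1) (hC : P.C = Q.C) : P = Q := by
  have hA : P.A = Q.A := by funext x; fin_cases x <;> assumption
  cases P; cases Q; simp_all

/-- If `𝒮` is a laminar (pairwise non-crossing) collection of many-sided separations of `G`,
then its separation projection `ρ(𝒮) = ⋃_{S ∈ 𝒮} ρ(S)` is a laminar collection of standard
separations of `G`. -/
theorem stmt3 (G : SimpleGraph V) (𝒮 : Set (MSep G))
    (hlam : 𝒮.Pairwise MSep.NonCrossing) :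
    (⋃ S ∈ 𝒮, S.proj).Pairwise GSep.NonCrossing := by
  rintro P hP Q hQ hPQ
  simp only [mem_iUnion, MSep.proj, mem_setOf_eq] at hP hQ
  obtain ⟨S, hS, p, hP0, hP1, hPC⟩ := hP
  obtain ⟨S', hS', q, hQ0, hQ1, hQC⟩ := hQ
  have h10 : (1 - 1 : Fin 2) = 0 := rfl
  have h01 : (1 - 0 : Fin 2) = 1 := rfl
  by_cases hSS : S = S'
  · subst hSS
    by_cases hpq : p = q
    · exact absurd (GSep.ext' (by rw [hP0, hQ0, hpq]) (by rw [hP1, hQ1, hpq])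
        (by rw [hPC, hQC])) hPQ
    · refine ⟨1, 1, ?_, ?_⟩
      · rw [h10, hP0, hPC, hQ1, hQC]
        rintro x (hx | hx)
        · exact Or.inl ⟨mem_iUnion.2 ⟨p, hx⟩, fun h => disjoint_left.mp (S.disj p q hpq) hx h⟩
        · exact Or.inr hx
      · rw [h10, hQ0, hQC, hP1, hPC]
        rintro x (hx | hx)
        · exact Or.inl ⟨mem_iUnion.2 ⟨q, hx⟩, fun h =>
            disjoint_left.mp (S.disj q p (Ne.symm hpq)) hx h⟩
        · exact Or.inr hx
  · obtain ⟨i, j, h1, h2⟩ := hlam hS hS' hSS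
    -- h1 : ((⋃ p, S'.A p) \ S'.A j) ∪ S'.C ⊆ S.A i ∪ S.C
    -- h2 : ((⋃ p, S.A p) \ S.A i) ∪ S.C ⊆ S'.A j ∪ S'.C
    by_cases hpi : p = i <;> by_cases hqj : q = j
    · subst hpi; subst hqj
      refine ⟨0, 0, ?_, ?_⟩
      · rw [h01, hP1, hPC, hQ0, hQC]; exact h2
      · rw [h01, hQ1, hQC, hP0, hPC]; exact h1
    · subst hpi
      refine ⟨0, 1, ?_, ?_⟩
      · rw [h01, hP1, hPC, hQ1, hQC]
        intro x hx
        rcases h2 hx with hx' | hx'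
        · exact Or.inl ⟨mem_iUnion.2 ⟨j, hx'⟩, fun h =>
            disjoint_left.mp (S'.disj j q (Ne.symm hqj)) hx' h⟩
        · exact Or.inr hx'
      · rw [h10, hQ0, hQC, hP0, hPC]
        rintro x (hx | hx)
        · exact h1 (Or.inl ⟨mem_iUnion.2 ⟨q, hx⟩, fun h =>
            disjoint_left.mp (S'.disj q j hqj) hx h⟩)
        · exact h1 (Or.inr hx)
    · subst hqj
      refine ⟨1, 0, ?_, ?_⟩
      · rw [h10, hP0, hPC, hQ0, hQC]
        rintro x (hx | hx)
        · exact h2 (Or.inl ⟨mem_iUnion.2 ⟨p, hx⟩, fun h =>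
            disjoint_left.mp (S.disj p i hpi) hx h⟩)
        · exact h2 (Or.inr hx)
      · rw [h01, hQ1, hQC, hP1, hPC]
        intro x hx
        rcases h1 hx with hx' | hx'
        · exact Or.inl ⟨mem_iUnion.2 ⟨i, hx'⟩, fun h =>
            disjoint_left.mp (S.disj i p (Ne.symm hpi)) hx' h⟩
        · exact Or.inr hx'
    · refine ⟨1, 1, ?_, ?_⟩
      · rw [h10, hP0, hPC, hQ1, hQC]
        rintro x (hx | hx)
        · rcases h2 (Or.inl ⟨mem_iUnion.2 ⟨p, hx⟩, fun h =>
            disjoint_left.mp (S.disj p i hpi) hx h⟩) with hx' | hx'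
          · exact Or.inl ⟨mem_iUnion.2 ⟨j, hx'⟩, fun h =>
              disjoint_left.mp (S'.disj j q (Ne.symm hqj)) hx' h⟩
          · exact Or.inr hx'
        · rcases h2 (Or.inr hx) with hx' | hx'
          · exact Or.inl ⟨mem_iUnion.2 ⟨j, hx'⟩, fun h =>
              disjoint_left.mp (S'.disj j q (Ne.symm hqj)) hx' h⟩
          · exact Or.inr hx'
      · rw [h10, hQ0, hQC, hP1, hPC]
        rintro x (hx | hx)
        · rcases h1 (Or.inl ⟨mem_iUnion.2 ⟨q, hx⟩, fun h =>
            disjoint_left.mp (S'.disj q j hqj) hx h⟩) with hx' | hx'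
          · exact Or.inl ⟨mem_iUnion.2 ⟨i, hx'⟩, fun h =>
              disjoint_left.mp (S.disj i p (Ne.symm hpi)) hx' h⟩
          · exact Or.inr hx'
        · rcases h1 (Or.inr hx) with hx' | hx'
          · exact Or.inl ⟨mem_iUnion.2 ⟨i, hx'⟩, fun h =>
              disjoint_left.mp (S.disj i p (Ne.symm hpi)) hx' h⟩
          · exact Or.inr hx'
end

section
/- Let G be a connected graph, (T, χ) a deciduous tree decomposition with bipartition (X, Y), leaves in Y, and let x ∈ X with S_x = (A_1, ..., A_k, C). Suppose C = χ(x) is a minimal cutset of G and A_1, ..., A_k are exactly the connected components of G \ C. Then for each neighbor y_i of x, χ(x) ⊆ χ(y_i); consequently the separation corresponding to edge xy_i is (A_i, ∪_{j≠i} A_j, C), i.e., it has middle set exactly C. -/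
open Set

variable {V t : Type*}

/-- `(T, χ)` is a tree decomposition of `G`: `T` is a tree, every vertex of `G` is in some
bag, every edge of `G` has both ends in some bag, and each vertex's support induces a
connected subgraph of `T`. -/
def IsTreeDecomp (G : SimpleGraph V) (T : SimpleGraph t) (χ : t → Set V) : Prop :=
  T.IsTree ∧ (∀ v : V, ∃ a, v ∈ χ a) ∧
    (∀ v w : V, G.Adj v w → ∃ a, v ∈ χ a ∧ w ∈ χ a) ∧
    ∀ v : V, (T.induce {a | v ∈ χ a}).Connected

/-- A leaf of `T` is a vertex with exactly one neighbor. -/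
def IsLeaf (T : SimpleGraph t) (a : t) : Prop := ∃! b, T.Adj a b

/-- `z` lies in the component of `T − x` containing `y`: there is a walk from `y` to `z`
avoiding `x`. -/
def AvoidReach (T : SimpleGraph t) (x y z : t) : Prop :=
  ∃ w : T.Walk y z, x ∉ w.support

/-- `χ(T_y)` for the component `T_y` of `T − x` containing `y`: the union of the bags of
the vertices in that component. -/
def branchBag (T : SimpleGraph t) (χ : t → Set V) (x y : t) : Set V :=
  ⋃ z ∈ {z | AvoidReach T x y z}, χ z

/-- `C` is a cutset of `G`: `G \ C` is disconnected. -/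
def IsCutset (G : SimpleGraph V) (C : Set V) : Prop :=
  ∃ a b : ↥(Cᶜ), ¬ (G.induce Cᶜ).Reachable a b

/-- `C` is a minimal cutset of `G`. -/
def MinimalCutset (G : SimpleGraph V) (C : Set V) : Prop :=
  IsCutset G C ∧ ∀ C' ⊂ C, (G.induce C'ᶜ).Connected

/-- The vertex sets of the connected components of `G \ C`. -/
def compSets (G : SimpleGraph V) (C : Set V) : Set (Set V) :=
  Set.range fun c : (G.induce Cᶜ).ConnectedComponent => Subtype.val '' c.supp

/-- The component of `T − e` (for the edge `e = ab`) containing `a`. -/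
def edgeComp (T : SimpleGraph t) (a b : t) : Set t :=
  {z | (T.deleteEdges {s(a, b)}).Reachable a z}

/-!
Every vertex `v` of the minimal cutset `C = χ(x)` has a neighbour `d` in each component of
`G \ C`, in particular in `A_i`. The edge `vd` lies in some bag `χ(a)`; since the bags containing
`d` form a subtree that meets `T_i` and misses `x`, the node `a` lies in `T_i`. The bags containing
`v` form a subtree containing `x` and `a`, hence also `y_i`, which separates them in `T`. The
separation of the edge `x y_i` is then read off: the side of `T − x y_i` containing `y_i` is `T_i`,
and the other side is `x` together with the `T_j`, `j ≠ i`.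
-/

open SimpleGraph

lemma SimpleGraph.IsTree.not_reachable_deleteEdges {T : SimpleGraph t} (hT : T.IsTree) {u v : t}
    (huv : T.Adj u v) : ¬ (T.deleteEdges {s(u, v)}).Reachable u v :=
  isBridge_iff.mp (isAcyclic_iff_forall_adj_isBridge.mp hT.isAcyclic huv)

namespace AvoidReach

variable {T : SimpleGraph t} {x y z : t}

lemma ne (h : AvoidReach T x y z) : z ≠ x := by
  rintro rfl
  obtain ⟨p, hp⟩ := h
  exact hp p.end_mem_support

lemma symm (h : AvoidReach T x y z) : AvoidReach T x z y := by
  obtain ⟨p, hp⟩ := h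
  exact ⟨p.reverse, by rwa [Walk.support_reverse, List.mem_reverse]⟩

lemma trans {w : t} (h₁ : AvoidReach T x y z) (h₂ : AvoidReach T x z w) : AvoidReach T x y w := by
  obtain ⟨p, hp⟩ := h₁
  obtain ⟨q, hq⟩ := h₂
  exact ⟨p.append q, by simp [Walk.mem_support_append_iff, hp, hq]⟩

lemma reachable_deleteEdges (h : AvoidReach T x y z) {e : Sym2 t} (he : x ∈ e) :
    (T.deleteEdges {e}).Reachable y z := by
  obtain ⟨p, hp⟩ := h
  exact (p.toDeleteEdge e fun hpe => hp (Walk.mem_support_of_mem_edges hpe he)).reachable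

end AvoidReach

section Tree

variable {T : SimpleGraph t} {x y z : t}

lemma reachable_deleteEdges_iff_avoidReach :
    (T.deleteEdges {s(x, y)}).Reachable x z ↔
      z = x ∨ ∃ w, T.Adj x w ∧ w ≠ y ∧ AvoidReach T x w z := by
  classical
  constructor
  · rintro ⟨p⟩
    obtain ⟨q, hq⟩ := p.toPath
    cases q with
    | nil => exact Or.inl rfl
    | @cons _ w _ hxw q =>
      obtain ⟨hxw, hne⟩ := deleteEdges_adj.mp hxw
      refine Or.inr ⟨w, hxw, fun hwy => hne (by rw [hwy]; rfl), q.mapLe (T.deleteEdges_le _), ?_⟩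
      rw [Walk.support_mapLe_eq_support]
      exact (Walk.cons_isPath_iff _ _).mp hq |>.2
  · rintro (rfl | ⟨w, hxw, hwy, hw⟩)
    · rfl
    · have hxw' : (T.deleteEdges {s(x, y)}).Adj x w :=
        deleteEdges_adj.mpr ⟨hxw, by rwa [Set.mem_singleton_iff, Sym2.congr_right]⟩
      exact hxw'.reachable.trans (hw.reachable_deleteEdges (Sym2.mem_mk_left _ _))

variable (hT : T.IsTree)
include hT

lemma avoidReach_iff_reachable_deleteEdges (hxy : T.Adj x y) :
    AvoidReach T x y z ↔ (T.deleteEdges {s(y, x)}).Reachable y z := by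
  classical
  refine ⟨fun h => h.reachable_deleteEdges (Sym2.mem_mk_right _ _), fun ⟨p⟩ => ?_⟩
  refine ⟨p.mapLe (T.deleteEdges_le _), fun hx => ?_⟩
  rw [Walk.support_mapLe_eq_support] at hx
  exact hT.not_reachable_deleteEdges hxy.symm (p.takeUntil x hx).reachable

lemma edgeComp_eq_setOf_avoidReach (hxy : T.Adj x y) :
    edgeComp T y x = {z | AvoidReach T x y z} :=
  Set.ext fun _ => (avoidReach_iff_reachable_deleteEdges hT hxy).symm

lemma AvoidReach.eq_of_adj {y' : t} (hxy : T.Adj x y) (hxy' : T.Adj x y')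
    (h : AvoidReach T x y z) (h' : AvoidReach T x y' z) : y = y' := by
  by_contra hne
  have hyy' : (T.deleteEdges {s(y, x)}).Reachable y y' :=
    (h.trans h'.symm).reachable_deleteEdges (Sym2.mem_mk_right _ _)
  have hy'x : (T.deleteEdges {s(y, x)}).Adj y' x :=
    deleteEdges_adj.mpr
      ⟨hxy'.symm, by rw [Set.mem_singleton_iff, Sym2.congr_left]; exact Ne.symm hne⟩
  exact hT.not_reachable_deleteEdges hxy.symm (hyy'.trans hy'x.reachable)

lemma AvoidReach.mem_support {a : t} (hxy : T.Adj x y) (ha : AvoidReach T x y a)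
    (p : T.Walk a x) : y ∈ p.support := by
  by_contra hy
  have hxa : (T.deleteEdges {s(x, y)}).Reachable x a :=
    reachable_deleteEdges_iff_exists_walk.mpr ⟨p.reverse, fun he =>
      hy (by simpa using Walk.mem_support_of_mem_edges he (Sym2.mem_mk_right x y))⟩
  rcases reachable_deleteEdges_iff_avoidReach.mp hxa with rfl | ⟨w, hxw, hwy, hw⟩
  · exact ha.ne rfl
  · exact hwy (AvoidReach.eq_of_adj hT hxw hxy hw ha)

end Tree

section Cutset

variable {G : SimpleGraph V} {C D : Set V}

lemma nonempty_of_mem_compSets (hD : D ∈ compSets G C) : D.Nonempty := by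
  obtain ⟨c, rfl⟩ := hD
  obtain ⟨r, hr⟩ := c.exists_rep
  exact ⟨r, r, hr, rfl⟩

lemma disjoint_of_mem_compSets (hD : D ∈ compSets G C) : Disjoint D C := by
  obtain ⟨c, rfl⟩ := hD
  exact Set.disjoint_left.mpr fun _ ⟨r, _, hr⟩ => hr ▸ r.2

lemma mem_compSets_of_adj (hD : D ∈ compSets G C) {u d : V} (hu : u ∉ C) (hd : d ∈ D)
    (hud : G.Adj u d) : u ∈ D := by
  obtain ⟨c, rfl⟩ := hD
  obtain ⟨d, hdc, rfl⟩ := hd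
  refine ⟨⟨u, hu⟩, ?_, rfl⟩
  rw [ConnectedComponent.mem_supp_iff] at hdc ⊢
  exact hdc ▸ ConnectedComponent.sound (show (G.induce Cᶜ).Adj ⟨u, hu⟩ d from hud).reachable

lemma IsCutset.exists_notMem_compSets (hC : IsCutset G C) (hD : D ∈ compSets G C) :
    ∃ w, w ∉ C ∧ w ∉ D := by
  obtain ⟨a, b, hab⟩ := hC
  obtain ⟨c, rfl⟩ := hD
  by_contra! h
  have hmem (p : ↥Cᶜ) : (G.induce Cᶜ).connectedComponentMk p = c := by
    obtain ⟨q, hq, hqp⟩ := h p p.2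
    rw [← Subtype.ext hqp, ← ConnectedComponent.mem_supp_iff]
    exact hq
  exact hab (ConnectedComponent.exact ((hmem a).trans (hmem b).symm))

lemma MinimalCutset.exists_adj_of_mem_compSets (hC : MinimalCutset G C) {v : V} (hv : v ∈ C)
    (hD : D ∈ compSets G C) : ∃ d ∈ D, G.Adj v d := by
  obtain ⟨w, hwC, hwD⟩ := hC.1.exists_notMem_compSets hD
  obtain ⟨r, hrD⟩ := nonempty_of_mem_compSets hD
  have hrC : r ∉ C := (disjoint_of_mem_compSets hD).notMem_of_mem_left hrD
  have hsub : Cᶜ ⊆ (C \ {v})ᶜ := compl_subset_compl.mpr sdiff_subset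
  obtain ⟨p⟩ := (hC.2 _ (sdiff_singleton_ssubset.mpr hv)).preconnected
    ⟨r, hsub hrC⟩ ⟨w, hsub hwC⟩
  obtain ⟨e, -, hfst, hsnd⟩ := p.exists_boundary_dart {u | u.1 ∈ D} hrD hwD
  have hsnd_eq : e.snd.1 = v := by
    by_contra hne
    have hsndC : e.snd.1 ∈ C := by
      by_contra hsndC
      exact hsnd (mem_compSets_of_adj hD hsndC hfst e.adj.symm)
    exact e.snd.2 ⟨hsndC, hne⟩
  have hadj : G.Adj e.snd.1 e.fst.1 := e.adj.symm
  exact ⟨e.fst, hfst, by rwa [hsnd_eq] at hadj⟩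

end Cutset

namespace IsTreeDecomp

variable {G : SimpleGraph V} {T : SimpleGraph t} {χ : t → Set V} (htd : IsTreeDecomp G T χ)
include htd

lemma exists_walk {v : V} {a b : t} (ha : v ∈ χ a) (hb : v ∈ χ b) :
    ∃ p : T.Walk a b, ∀ c ∈ p.support, v ∈ χ c := by
  obtain ⟨p⟩ := (htd.2.2.2 v).preconnected ⟨a, ha⟩ ⟨b, hb⟩
  have hp : ∀ c ∈ (p.map (Embedding.induce _).toHom).support, v ∈ χ c := by
    intro c hc
    rw [Walk.support_map, List.mem_map] at hc
    obtain ⟨c, -, rfl⟩ := hc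
    exact c.2
  exact ⟨_, hp⟩

lemma mem_of_avoidReach {x y a : t} {v : V} (hxy : T.Adj x y) (hvx : v ∈ χ x) (hva : v ∈ χ a)
    (ha : AvoidReach T x y a) : v ∈ χ y :=
  let ⟨p, hp⟩ := htd.exists_walk hva hvx
  hp y (ha.mem_support htd.1 hxy p)

lemma avoidReach_of_mem_branchBag {x y a : t} {d : V} (hd : d ∈ branchBag T χ x y \ χ x)
    (hda : d ∈ χ a) : AvoidReach T x y a := by
  obtain ⟨hd, hdx⟩ := hd
  simp only [branchBag, mem_iUnion₂, mem_ofPred_eq] at hd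
  obtain ⟨z, hz, hdz⟩ := hd
  obtain ⟨p, hp⟩ := htd.exists_walk hdz hda
  exact hz.trans ⟨p, fun hx => hdx (hp x hx)⟩

lemma subset_of_minimalCutset {x y : t} (hxy : T.Adj x y) (hcut : MinimalCutset G (χ x))
    (hcomp : branchBag T χ x y \ χ x ∈ compSets G (χ x)) : χ x ⊆ χ y := by
  intro v hv
  obtain ⟨d, hd, hvd⟩ := hcut.exists_adj_of_mem_compSets hv hcomp
  obtain ⟨a, hva, hda⟩ := htd.2.2.1 v d hvd
  exact htd.mem_of_avoidReach hxy hv hva (htd.avoidReach_of_mem_branchBag hd hda)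

end IsTreeDecomp

lemma biUnion_edgeComp_diff_eq {T : SimpleGraph t} (χ : t → Set V) {x : t} {k : ℕ}
    {y : Fin k → t} (hyinj : Function.Injective y) (hyadj : ∀ i, T.Adj x (y i))
    (hysurj : ∀ z, T.Adj x z → ∃ i, y i = z) (i : Fin k) :
    (⋃ z ∈ edgeComp T x (y i), χ z) \ χ x =
      ⋃ j ∈ {j | j ≠ i}, (branchBag T χ x (y j) \ χ x) := by
  ext v
  simp only [edgeComp, branchBag, mem_sdiff, mem_iUnion, mem_ofPred_eq, exists_prop,
    reachable_deleteEdges_iff_avoidReach]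
  constructor
  · rintro ⟨⟨z, rfl | ⟨w, hxw, hwy, hw⟩, hvz⟩, hvx⟩
    · exact absurd hvz hvx
    · obtain ⟨j, rfl⟩ := hysurj w hxw
      exact ⟨j, fun hji => hwy (hji ▸ rfl), ⟨z, hw, hvz⟩, hvx⟩
  · rintro ⟨j, hji, ⟨z, hz, hvz⟩, hvx⟩
    exact ⟨⟨z, Or.inr ⟨y j, hyadj j, hyinj.ne hji, hz⟩, hvz⟩, hvx⟩

theorem stmt10_general (G : SimpleGraph V)
    (T : SimpleGraph t) (χ : t → Set V) (htd : IsTreeDecomp G T χ)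
    (x : t)
    (k : ℕ) (y : Fin k → t) (hyinj : Function.Injective y)
    (hyadj : ∀ i, T.Adj x (y i)) (hysurj : ∀ z, T.Adj x z → ∃ i, y i = z)
    (hcut : MinimalCutset G (χ x))
    (hcomp : ∀ i, branchBag T χ x (y i) \ χ x ∈ compSets G (χ x)) :
    ∀ i, χ x ⊆ χ (y i) ∧
      χ x ∩ χ (y i) = χ x ∧
      (⋃ z ∈ edgeComp T (y i) x, χ z) \ (χ x ∩ χ (y i)) =
        branchBag T χ x (y i) \ χ x ∧
      (⋃ z ∈ edgeComp T x (y i), χ z) \ (χ x ∩ χ (y i)) =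
        ⋃ j ∈ {j | j ≠ i}, (branchBag T χ x (y j) \ χ x) := by
  intro i
  have hsub : χ x ⊆ χ (y i) := htd.subset_of_minimalCutset (hyadj i) hcut (hcomp i)
  have hmid : χ x ∩ χ (y i) = χ x := inter_eq_left.mpr hsub
  refine ⟨hsub, hmid, ?_, ?_⟩
  · rw [hmid, edgeComp_eq_setOf_avoidReach htd.1 (hyadj i)]
    rfl
  · rw [hmid, biUnion_edgeComp_diff_eq χ hyinj hyadj hysurj i]

/-- Let `(T, χ)` be a deciduous tree decomposition of a connected graph `G`, with
bipartition `(X, Xᶜ)`, leaves in `Xᶜ`, and `x ∈ X` with neighbors `y 1, …, y k`, so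
`S_x = (A 1, …, A k, C)` with `C = χ(x)` and `A i = χ(T_i) \ χ(x)`. Suppose `C` is a
minimal cutset of `G` and the `A i` are exactly the connected components of `G \ C`.
Then `χ(x) ⊆ χ(y i)` for each `i`; consequently the separation corresponding to the edge
`x(y i)` has middle set exactly `C = χ(x) ∩ χ(y i)` and sides `A i` and `⋃_{j ≠ i} A j`. -/
theorem stmt10 [Fintype V] (G : SimpleGraph V) (hG : G.Connected)
    (T : SimpleGraph t) (χ : t → Set V) (htd : IsTreeDecomp G T χ)
    (X : Set t) (hbip : ∀ a b, T.Adj a b → (a ∈ X ↔ b ∉ X))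
    (hleaf : ∀ a, IsLeaf T a → a ∉ X)
    (x : t) (hx : x ∈ X)
    (k : ℕ) (y : Fin k → t) (hyinj : Function.Injective y)
    (hyadj : ∀ i, T.Adj x (y i)) (hysurj : ∀ z, T.Adj x z → ∃ i, y i = z)
    (hcut : MinimalCutset G (χ x))
    (hcomp : ∀ i, branchBag T χ x (y i) \ χ x ∈ compSets G (χ x))
    (hcompsurj : ∀ D ∈ compSets G (χ x), ∃ i, branchBag T χ x (y i) \ χ x = D) :
    ∀ i, χ x ⊆ χ (y i) ∧
      χ x ∩ χ (y i) = χ x ∧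
      (⋃ z ∈ edgeComp T (y i) x, χ z) \ (χ x ∩ χ (y i)) =
        branchBag T χ x (y i) \ χ x ∧
      (⋃ z ∈ edgeComp T x (y i), χ z) \ (χ x ∩ χ (y i)) =
        ⋃ j ∈ {j | j ≠ i}, (branchBag T χ x (y j) \ χ x) :=
  stmt10_general G T χ htd x k y hyinj hyadj hysurj hcut hcomp
end

section
/- In a finite nonempty collection 𝒮 of pairwise non-crossing many-sided separations of a graph G, there exists S = (A_1, ..., A_k, C) ∈ 𝒮 and an index 1 ≤ i ≤ k such that for every S' = (A'_1, ..., A'_{k'}, C') ∈ 𝒮 \ {S}, there exists 1 ≤ j ≤ k' with ((∪_p A'_p) \ A'_j) ∪ C' ⊆ A_i ∪ C. -/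
open Set

variable {V : Type*}

lemma msep_key {G : SimpleGraph V} (S : MSep G) (j : Fin (S.n + 2)) :
    ((⋃ p, S.A p) \ S.A j) ∪ S.C = (S.A j)ᶜ := by
  ext x
  constructor
  · rintro (⟨-, hx⟩ | hc)
    · exact hx
    · exact fun hj => (S.disjC j).le_bot ⟨hj, hc⟩
  · intro hx
    have : x ∈ (⋃ p, S.A p) ∪ S.C := S.cover ▸ mem_univ x
    rcases this with h | h
    · exact Or.inl ⟨h, hx⟩
    · exact Or.inr h

lemma msep_side_subset {G : SimpleGraph V} (S : MSep G) {i i' : Fin (S.n + 2)}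
    (h : i' ≠ i) : S.A i' ⊆ (S.A i ∪ S.C)ᶜ := by
  intro x hx
  rintro (h1 | h2)
  · exact (S.disj i' i h).le_bot ⟨hx, h1⟩
  · exact (S.disjC i').le_bot ⟨hx, h2⟩

/-- Reformulation of non-crossing. -/
lemma msep_nc {G : SimpleGraph V} {S S' : MSep G} (h : S.NonCrossing S') :
    ∃ (i : Fin (S.n + 2)) (j : Fin (S'.n + 2)),
      (S.A i ∪ S.C)ᶜ ⊆ S'.A j ∧ (S'.A j ∪ S'.C)ᶜ ⊆ S.A i := by
  obtain ⟨i, j, h1, h2⟩ := h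
  rw [msep_key] at h1 h2
  exact ⟨i, j, compl_subset_comm.mp h1, fun x hx =>
    by_contra fun hc => hx (h2 hc)⟩

/-- In a finite nonempty pairwise non-crossing collection `𝒮` of many-sided separations,
there is an `S = (A 1, …, A k, C) ∈ 𝒮` and a side `i` such that for every
`S' = (A' 1, …, A' k', C') ∈ 𝒮 \ {S}` there is a side `j` with
`((⋃_p A'_p) \ A'_j) ∪ C' ⊆ A_i ∪ C`. -/
theorem stmt14 [Fintype V] (G : SimpleGraph V) (𝒮 : Set (MSep G))
    (hfin : 𝒮.Finite) (hne : 𝒮.Nonempty)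
    (hlam : 𝒮.Pairwise MSep.NonCrossing) :
    ∃ S ∈ 𝒮, ∃ i : Fin (S.n + 2), ∀ S' ∈ 𝒮, S' ≠ S →
      ∃ j : Fin (S'.n + 2),
        ((⋃ p, S'.A p) \ S'.A j) ∪ S'.C ⊆ S.A i ∪ S.C := by
  
  -- abbreviation
  set R : (T : MSep G) → Fin (T.n + 2) → Set V := fun T k => (T.A k ∪ T.C)ᶜ with hR
  -- pick (S, i) minimizing the cardinality of R S i
  have hTne : {m : ℕ | ∃ T ∈ 𝒮, ∃ k, (R T k).ncard = m}.Nonempty :=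
    ⟨_, hne.choose, hne.choose_spec, 0, rfl⟩
  obtain ⟨S, hS, i, hcard⟩ := Nat.sInf_mem hTne
  have hmin : ∀ T ∈ 𝒮, ∀ k, R T k ⊆ R S i → R T k = R S i := by
    intro T hT k hsub
    refine Set.eq_of_subset_of_ncard_le hsub ?_ (Set.toFinite _)
    rw [hcard]
    exact Nat.sInf_le ⟨T, hT, k, rfl⟩
  -- the goal, reformulated
  suffices h : ∃ S ∈ 𝒮, ∃ i : Fin (S.n + 2), ∀ S' ∈ 𝒮, S' ≠ S →
      ∃ j : Fin (S'.n + 2), R S i ⊆ S'.A j by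
    obtain ⟨T, hT, k, hk⟩ := h
    refine ⟨T, hT, k, fun S' hS' hne' => ?_⟩
    obtain ⟨j, hj⟩ := hk S' hS' hne'
    exact ⟨j, by rw [msep_key]; exact compl_subset_comm.mpr hj⟩
  -- "fails" analysis
  have stepA : ∀ S' ∈ 𝒮, S' ≠ S → (¬ ∃ j, R S i ⊆ S'.A j) →
      ∃ j, R S' j = R S i ∧ ∃ i', R S i ⊆ S.A i' := by
    intro S' hS' hne' hfail
    obtain ⟨i', j, h1, h2⟩ := msep_nc (hlam hS hS' (Ne.symm hne'))
    rcases eq_or_ne i' i with rfl | hii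
    · exact absurd ⟨j, h1⟩ hfail
    · have hsub : R S' j ⊆ R S i := h2.trans (msep_side_subset S hii)
      have heq := hmin S' hS' j hsub
      exact ⟨j, heq, i', heq ▸ h2⟩
  by_cases hall : ∀ S' ∈ 𝒮, S' ≠ S → ∃ j, R S i ⊆ S'.A j
  · exact ⟨S, hS, i, hall⟩
  push_neg at hall
  obtain ⟨S₀, hS₀, hne₀, hfail₀⟩ := hall
  obtain ⟨j₀, hj₀, i', hi'⟩ := stepA S₀ hS₀ hne₀ (by rintro ⟨j, hj⟩; exact hfail₀ j hj)
  refine ⟨S₀, hS₀, j₀, fun S'' hS'' hne'' => ?_⟩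
  rcases eq_or_ne S'' S with rfl | hne2
  · exact ⟨i', hj₀ ▸ hi'⟩
  · -- S'' ∉ {S, S₀}: show S'' does not fail, else contradiction with S₀ failing
    by_contra hfail''
    push_neg at hfail''
    have hfail3 : ¬ ∃ j, R S i ⊆ S''.A j := by
      rintro ⟨j, hj⟩
      exact hfail'' j (hj₀ ▸ hj)
    obtain ⟨j₂, hj₂, -⟩ := stepA S'' hS'' hne2 hfail3
    -- non-crossing between S₀ and S''
    obtain ⟨a, b, h1, h2⟩ := msep_nc (hlam hS₀ hS'' (Ne.symm hne''))
    have h1' : R S₀ a ⊆ S''.A b := h1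
    have h2' : R S'' b ⊆ S₀.A a := h2
    rcases eq_or_ne a j₀ with rfl | haj
    · exact hfail3 ⟨b, hj₀ ▸ h1'⟩
    · have hsub : R S'' b ⊆ R S i :=
        h2'.trans ((msep_side_subset S₀ haj).trans hj₀.subset)
      have heq := hmin S'' hS'' b hsub
      exact hfail₀ a (heq ▸ h2')
end
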